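/- arXiv:2508.01189 — 4 statements merged into one kernel-verified Lean document; each statement's English description precedes it below -/
import Mathlib

section
/- For every real number λ and every positive integer n, the degenerate harmonic number H_{n,λ} satisfies H_{n,λ} = Σ_{k=1}^{n} C(n,k) · ((-1)^{k-1}/k) · binom(λ+k-1, k-1). -/
/-- Generalized binomial coefficient `binom(x, k) = x (x-1) ⋯ (x-k+1) / k!` for real `x`. -/
noncomputable def rchoose (x : ℝ) (k : ℕ) : ℝ :=
  (∏ i ∈ Finset.range k, (x - i)) / (Nat.factorial k)

/-- Degenerate harmonic numbers `H_{n,λ} = ∑_{k=1}^n binom(λ-1, k-1) (-1)^{k-1} / k`,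
with `H_{0,λ} = 0`. -/
noncomputable def degHarmonic (lam : ℝ) (n : ℕ) : ℝ :=
  ∑ k ∈ Finset.Icc 1 n, rchoose (lam - 1) (k - 1) * (-1) ^ (k - 1) / k

/-!
Both sides vanish for `n = 0`, so it suffices to compare increments. Passing from `n - 1` to `n`,
Pascal's rule and the absorption `C(n-1, k-1) / k = C(n, k) / n` turn the increment of the right
side into `(1/n) ∑_k C(n, k) (-1)^(k-1) binom(λ+k-1, k-1)`. Upper negation rewrites the summand as
`C(n, k) binom(-λ-1, k-1)`, and Chu–Vandermonde sums it to
`binom(n-1-λ, n-1) = (-1)^(n-1) binom(λ-1, n-1)`, which is `n` times the increment of `H_{n,λ}`.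
-/

open Finset

theorem rchoose_eq_ringChoose (x : ℝ) (k : ℕ) : rchoose x k = Ring.choose x k := by
  rw [rchoose, Ring.choose_eq_smul, ← Polynomial.aeval_eq_smeval, Polynomial.aeval_def,
    Polynomial.eval₂_eq_eval_map, descPochhammer_map, descPochhammer_eval_eq_prod_range,
    smul_eq_mul, div_eq_inv_mul]

theorem Finset.sum_Icc_one_eq_sum_range {M : Type*} [AddCommMonoid M] (f : ℕ → M) (n : ℕ) :
    ∑ k ∈ Icc 1 n, f k = ∑ j ∈ range n, f (j + 1) := by
  rw [range_eq_Ico, sum_Ico_add' f 0 n 1, zero_add, Ico_add_one_right_eq_Icc]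

theorem Nat.cast_choose_div_add_one {K : Type*} [Field K] [CharZero K] (n j : ℕ) :
    (n.choose j : K) / (j + 1) = ((n + 1).choose (j + 1) : K) / (n + 1) := by
  have h := congrArg (Nat.cast (R := K)) (Nat.add_one_mul_choose_eq n j)
  push_cast at h
  rw [div_eq_div_iff (Nat.cast_add_one_ne_zero j) (Nat.cast_add_one_ne_zero n)]
  linear_combination h

namespace Ring

variable {R : Type*} [CommRing R] [BinomialRing R]

theorem choose_neg_eq_neg_one_pow_mul (r : R) (n : ℕ) :
    choose (-r) n = (-1) ^ n * choose (r + n - 1) n := by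
  rw [choose_neg, Int.negOnePow_def, Units.smul_def]
  simp

theorem sum_range_choose_succ_mul_neg_one_pow_mul_choose (r : R) (n : ℕ) :
    ∑ j ∈ range (n + 1), ((n + 1).choose (j + 1) : R) * ((-1) ^ j * choose (r + j) j) =
      (-1) ^ n * choose (r - 1) n := by
  have upper_negation : ∀ j ∈ range (n + 1),
      ((n + 1).choose (j + 1) : R) * ((-1) ^ j * choose (r + j) j) =
        choose (-(r + 1)) j * choose ((n + 1 : ℕ) : R) (n - j) := by
    intro j hj
    rw [choose_natCast, Nat.choose_symm_of_eq_add (by grind : n + 1 = j + 1 + (n - j)),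
      choose_neg_eq_neg_one_pow_mul]
    ring_nf
  calc _ = choose (-(r + 1) + (n + 1 : ℕ)) n := by
        rw [sum_congr rfl upper_negation, add_choose_eq n (Commute.all _ _),
          Nat.sum_antidiagonal_eq_sum_range_succ (fun i j ↦ choose (-(r + 1)) i * choose _ j)]
    _ = choose (-(r - n)) n := by push_cast; ring_nf
    _ = (-1) ^ n * choose (r - 1) n := by rw [choose_neg_eq_neg_one_pow_mul]; ring_nf

theorem sum_range_choose_sub_one_mul_neg_one_pow_div {K : Type*} [Field K] [CharZero K]
    [BinomialRing K] (y : K) (n : ℕ) :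
    ∑ j ∈ range n, choose (y - 1) j * (-1) ^ j / (j + 1) =
      ∑ j ∈ range n, (n.choose (j + 1) : K) * ((-1) ^ j / (j + 1)) * choose (y + j) j := by
  induction n with
  | zero => simp
  | succ n ih =>
    set c : ℕ → K := fun j ↦ (-1) ^ j / (j + 1) * choose (y + j) j with hc
    have absorb (j : ℕ) : (n.choose j : K) * c j =
        ((n + 1).choose (j + 1) : K) * ((-1) ^ j * choose (y + j) j) / (n + 1) := by
      calc (n.choose j : K) * c j = (n.choose j : K) / (j + 1) * ((-1) ^ j * choose (y + j) j) := by
            ring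
        _ = _ := by rw [Nat.cast_choose_div_add_one]; ring
    calc ∑ j ∈ range (n + 1), choose (y - 1) j * (-1) ^ j / (j + 1)
        = ∑ j ∈ range n, (n.choose (j + 1) : K) * c j +
            ∑ j ∈ range (n + 1), (n.choose j : K) * c j := by
          rw [sum_range_succ, ih, sum_congr rfl fun j _ ↦ absorb j, ← sum_div,
            sum_range_choose_succ_mul_neg_one_pow_mul_choose]
          simp only [hc, mul_div_assoc, mul_assoc]
          ring
      _ = ∑ j ∈ range (n + 1), ((n + 1).choose (j + 1) : K) * c j := by
          simp only [Nat.choose_succ_succ', Nat.cast_add, add_mul, sum_add_distrib,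
            sum_range_succ (fun j ↦ (n.choose (j + 1) : K) * c j), Nat.choose_succ_self,
            Nat.cast_zero, zero_mul, add_zero]
          exact add_comm _ _
      _ = _ := by simp only [hc, mul_assoc]

end Ring

theorem degHarmonic_eq_sum_choose_general (lam : ℝ) (n : ℕ) :
    degHarmonic lam n =
      ∑ k ∈ Finset.Icc 1 n,
        (n.choose k : ℝ) * ((-1) ^ (k - 1) / k) * rchoose (lam + k - 1) (k - 1) := by
  simp only [degHarmonic, sum_Icc_one_eq_sum_range, Nat.add_sub_cancel, rchoose_eq_ringChoose,
    Nat.cast_add_one, ← add_assoc, add_sub_cancel_right]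
  exact Ring.sum_range_choose_sub_one_mul_neg_one_pow_div lam n

theorem degHarmonic_eq_sum_choose (lam : ℝ) (n : ℕ) (hn : 0 < n) :
    degHarmonic lam n =
      ∑ k ∈ Finset.Icc 1 n,
        (n.choose k : ℝ) * ((-1) ^ (k - 1) / k) * rchoose (lam + k - 1) (k - 1) :=
  degHarmonic_eq_sum_choose_general lam n
end

section
/- Let (a_n)_{n≥1} and (b_n)_{n≥1} be sequences of real numbers such that for every positive integer n, Σ_{k=1}^{n} C(n,k) (-1)^{k-1} a_k = b_n. Then for every positive integer n, Σ_{k=1}^{n} C(n,k) (-1)^{k-1} a_k / k = Σ_{k=1}^{n} b_k / k. -/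
/-! Since `C(n+1,k)/k = C(n,k)/k + C(n+1,k)/(n+1)` for `k ≥ 1`, passing from `n` to `n+1` adds
exactly `b_{n+1}/(n+1)` to the left-hand side, so both sides grow by the same increments. -/

open Finset

theorem Nat.add_one_mul_choose_succ_eq (n k : ℕ) :
    (n + 1) * (n + 1).choose k = (n + 1) * n.choose k + k * (n + 1).choose k := by
  rcases le_or_gt k (n + 1) with hk | hk
  · have h := Nat.choose_mul_succ_eq n k
    have : (n + 1 - k) + k = n + 1 := Nat.sub_add_cancel hk
    nlinarith
  · simp [Nat.choose_eq_zero_of_lt hk, Nat.choose_eq_zero_of_lt (Nat.lt_of_succ_lt hk)]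

section

variable {K : Type*} [Field K] [CharZero K]

theorem cast_choose_succ_div {k : ℕ} (hk : k ≠ 0) (n : ℕ) :
    ((n + 1).choose k : K) / k = (n.choose k : K) / k + ((n + 1).choose k : K) / (n + 1) := by
  have h : ((n : K) + 1) * (n + 1).choose k = (n + 1) * n.choose k + k * (n + 1).choose k := by
    exact_mod_cast Nat.add_one_mul_choose_succ_eq n k
  field_simp
  linear_combination h

theorem sum_Icc_choose_succ_mul_div (c : ℕ → K) (n : ℕ) :
    ∑ k ∈ Icc 1 (n + 1), ((n + 1).choose k : K) * c k / k =
      ∑ k ∈ Icc 1 n, (n.choose k : K) * c k / k +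
        (∑ k ∈ Icc 1 (n + 1), ((n + 1).choose k : K) * c k) / (n + 1) := by
  have hsplit : ∀ k ∈ Icc 1 (n + 1), ((n + 1).choose k : K) * c k / k =
      (n.choose k : K) * c k / k + ((n + 1).choose k : K) * c k / (n + 1) := by
    intro k hk
    have hk0 : k ≠ 0 := by rw [mem_Icc] at hk; omega
    rw [mul_div_right_comm, cast_choose_succ_div hk0, mul_div_right_comm, mul_div_right_comm]
    ring
  rw [sum_congr rfl hsplit, sum_add_distrib, sum_div, sum_Icc_succ_top (by omega : 1 ≤ n + 1),
    Nat.choose_succ_self, Nat.cast_zero, zero_mul, zero_div, add_zero]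

theorem sum_Icc_choose_mul_div (c : ℕ → K) (n : ℕ) :
    ∑ k ∈ Icc 1 n, (n.choose k : K) * c k / k =
      ∑ m ∈ Icc 1 n, (∑ k ∈ Icc 1 m, (m.choose k : K) * c k) / m := by
  induction n with
  | zero => simp
  | succ n ih =>
    rw [sum_Icc_choose_succ_mul_div, ih, sum_Icc_succ_top (by omega : 1 ≤ n + 1)
      (fun m => (∑ k ∈ Icc 1 m, (m.choose k : K) * c k) / m), Nat.cast_succ]

end

theorem binomial_transform_div (a b : ℕ → ℝ)
    (h : ∀ n : ℕ, 1 ≤ n →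
      ∑ k ∈ Finset.Icc 1 n, (n.choose k : ℝ) * (-1) ^ (k - 1) * a k = b n) :
    ∀ n : ℕ, 1 ≤ n →
      ∑ k ∈ Finset.Icc 1 n, (n.choose k : ℝ) * (-1) ^ (k - 1) * a k / k =
        ∑ k ∈ Finset.Icc 1 n, b k / k := by
  intro n _
  simp only [mul_assoc] at h ⊢
  rw [sum_Icc_choose_mul_div (fun k => (-1) ^ (k - 1) * a k) n]
  exact sum_congr rfl fun m hm => by rw [h m (mem_Icc.1 hm).1]
end

section
/- Fix a real number λ and a positive integer n. For each positive integer k, let B_k denote the formal power series over ℝ given by B_k := (1/k!) · ( Σ_{j≥1} binom(λ-1, j-1) (-1)^{j-1} X^j / j )^k, so that n! times the coefficient of X^n in B_k is the unsigned degenerate Stirling number of the first kind [n k]_λ. Then the degenerate harmonic number satisfies H_{n,λ} = Σ_{k=1}^{n} k · (1)_{k-1,−λ} · coeff_{X^n}(B_k), i.e., n! · H_{n,λ} = Σ_{k=1}^{n} k · (1)_{k-1,−λ} · [n k]_λ, where (1)_{0,−λ} = 1 and (1)_{m,−λ} = 1·(1+λ)·(1+2λ)⋯(1+(m-1)λ).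 -/
/-- Degenerate falling factorial `(x)_{m,λ} = x (x-λ) (x-2λ) ⋯ (x-(m-1)λ)`. -/
noncomputable def dff (x lam : ℝ) (m : ℕ) : ℝ := ∏ i ∈ Finset.range m, (x - i * lam)

/-- `B_k = (1/k!) (−log_λ(1−X))^k = (1/k!) (∑_{j≥1} binom(λ-1, j-1) (-1)^{j-1} X^j / j)^k`,
whose `n`-th coefficient times `n!` is the unsigned degenerate Stirling number of the
first kind `[n k]_λ`. -/
noncomputable def Bser (lam : ℝ) (k : ℕ) : PowerSeries ℝ :=
  ((Nat.factorial k : ℝ))⁻¹ •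
    (PowerSeries.mk fun j =>
      if j = 0 then (0 : ℝ) else rchoose (lam - 1) (j - 1) * (-1) ^ (j - 1) / j) ^ k

open PowerSeries Finset

theorem Finset.sum_range_succ_eq_sum_Icc_one {M : Type*} [AddCommMonoid M] {f : ℕ → M}
    (hf : f 0 = 0) (n : ℕ) : ∑ i ∈ range (n + 1), f i = ∑ i ∈ Icc 1 n, f i := by
  rw [Nat.range_succ_eq_Icc_zero, ← insert_Icc_add_one_left_eq_Icc n.zero_le, Nat.zero_add,
    sum_insert (by simp), hf, zero_add]

namespace PowerSeries

variable {R : Type*}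

theorem coeff_subst_eq_sum [CommRing R] {f g : R⟦X⟧} (hg : constantCoeff g = 0) (n : ℕ) :
    coeff n (f.subst g) = ∑ d ∈ range (n + 1), coeff d f * coeff n (g ^ d) := by
  rw [coeff_subst' (HasSubst.of_constantCoeff_zero' hg)]
  refine finsum_eq_sum_of_support_subset _ fun d hd => ?_
  by_contra hdn
  have hnd : (n : ℕ∞) < d := by simpa [Nat.lt_succ_iff] using hdn
  simp only [Function.mem_support] at hd
  exact hd (by
    rw [coeff_of_lt_order n (hnd.trans_le (le_order_pow_of_constantCoeff_eq_zero d hg)), smul_zero])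

theorem constantCoeff_subst_of_constantCoeff_zero [CommRing R] {f g : R⟦X⟧}
    (hg : constantCoeff g = 0) : constantCoeff (f.subst g) = constantCoeff f := by
  simpa using coeff_subst_eq_sum (f := f) hg 0

theorem one_sub_X_mul_derivative_subst [CommRing R] {c : R} {f g : R⟦X⟧}
    (hf : (1 - c • X) * d⁄dX R f = f) (hg : (1 - X) * d⁄dX R g = 1 - c • g)
    (hg0 : constantCoeff g = 0) :
    (1 - X) * d⁄dX R (f.subst g) = f.subst g := by
  have hsubst : HasSubst g := HasSubst.of_constantCoeff_zero' hg0
  have hf' := congrArg (substAlgHom (R := R) hsubst) hf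
  rw [map_mul, map_sub, map_one, map_smul, substAlgHom_X, coe_substAlgHom] at hf'
  rw [derivative_subst hsubst, mul_left_comm, hg, mul_comm, hf']

theorem eq_mk_one_of_one_sub_X_mul_derivative [CommRing R] [IsAddTorsionFree R] {f : R⟦X⟧}
    (hf : (1 - X) * d⁄dX R f = f) (h0 : constantCoeff f = 1) : f = mk 1 := by
  have hinv : (1 - X) * f = 1 := by
    refine derivative.ext ?_ (by simp [h0])
    rw [Derivation.leibniz, smul_eq_mul, hf]
    simp
  calc f = f * ((1 - X) * mk 1) := by rw [mul_comm (1 - X), mk_one_mul_one_sub_eq_one, mul_one]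
    _ = mk 1 := by rw [← mul_assoc, mul_comm f, hinv, one_mul]

theorem coeff_mul_mk_one [CommSemiring R] (f : R⟦X⟧) (n : ℕ) :
    coeff n (f * mk 1) = ∑ i ∈ range (n + 1), coeff i f := by
  simp [coeff_mul, Nat.sum_antidiagonal_eq_sum_range_succ_mk]

end PowerSeries

lemma rchoose_succ (x : ℝ) (k : ℕ) :
    rchoose x (k + 1) = rchoose x k * (x - k) / (k + 1) := by
  rw [rchoose, rchoose, prod_range_succ, Nat.factorial_succ]
  push_cast
  field_simp

lemma dff_succ (x lam : ℝ) (m : ℕ) :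
    dff x lam (m + 1) = dff x lam m * (x - m * lam) := prod_range_succ _ _

/-- `-log_λ(1 - X) = log_{-λ}(1/(1 - X))` -/
noncomputable def degLog (lam : ℝ) : ℝ⟦X⟧ :=
  mk fun j => if j = 0 then 0 else rchoose (lam - 1) (j - 1) * (-1) ^ (j - 1) / j

/-- The degenerate exponential `e_{-λ}(t)`, compositional inverse of `log_{-λ}`. -/
noncomputable def degExp (lam : ℝ) : ℝ⟦X⟧ :=
  mk fun m => dff 1 (-lam) m / m.factorial

lemma Bser_eq (lam : ℝ) (k : ℕ) : Bser lam k = ((k.factorial : ℝ))⁻¹ • degLog lam ^ k := rfl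

lemma constantCoeff_degLog (lam : ℝ) : constantCoeff (degLog lam) = 0 := by
  simp [degLog, ← coeff_zero_eq_constantCoeff_apply]

lemma coeff_succ_degLog (lam : ℝ) (m : ℕ) :
    coeff (m + 1) (degLog lam) = rchoose (lam - 1) m * (-1) ^ m / (m + 1) := by
  simp [degLog]

lemma one_sub_X_mul_derivative_degLog (lam : ℝ) :
    (1 - X) * d⁄dX ℝ (degLog lam) = 1 - lam • degLog lam := by
  ext n
  rw [sub_mul, one_mul, map_sub, map_sub, LinearMap.map_smul, smul_eq_mul]
  rcases n with _ | m
  · rw [coeff_zero_X_mul, coeff_derivative]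
    simp [degLog, rchoose]
  · rw [coeff_succ_X_mul, coeff_derivative, coeff_derivative, coeff_one, if_neg m.succ_ne_zero]
    simp only [coeff_succ_degLog, rchoose_succ]
    push_cast
    field_simp
    ring

lemma one_sub_smul_X_mul_derivative_degExp (lam : ℝ) :
    (1 - lam • X) * d⁄dX ℝ (degExp lam) = degExp lam := by
  ext n
  rw [sub_mul, one_mul, map_sub, smul_mul_assoc, LinearMap.map_smul, smul_eq_mul]
  rcases n with _ | m
  · rw [coeff_zero_X_mul, coeff_derivative]
    simp [degExp, dff]
  · rw [coeff_succ_X_mul, coeff_derivative, coeff_derivative]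
    simp only [degExp, coeff_mk, dff_succ, Nat.factorial_succ]
    push_cast
    field_simp
    ring

lemma coeff_X_mul_degExp (lam : ℝ) {k : ℕ} (hk : k ≠ 0) :
    coeff k (X * degExp lam) = k * dff 1 (-lam) (k - 1) / k.factorial := by
  obtain ⟨m, rfl⟩ := Nat.exists_eq_succ_of_ne_zero hk
  rw [coeff_succ_X_mul, degExp, coeff_mk, Nat.factorial_succ]
  push_cast
  field_simp

lemma degExp_subst_degLog (lam : ℝ) : (degExp lam).subst (degLog lam) = PowerSeries.mk 1 := by
  refine eq_mk_one_of_one_sub_X_mul_derivative ?_ ?_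
  · exact one_sub_X_mul_derivative_subst (one_sub_smul_X_mul_derivative_degExp lam)
      (one_sub_X_mul_derivative_degLog lam) (constantCoeff_degLog lam)
  · rw [constantCoeff_subst_of_constantCoeff_zero (constantCoeff_degLog lam)]
    simp [degExp, dff, ← coeff_zero_eq_constantCoeff_apply]

lemma degHarmonic_eq_sum_coeff_degLog (lam : ℝ) (n : ℕ) :
    degHarmonic lam n = ∑ i ∈ range (n + 1), coeff i (degLog lam) := by
  rw [degHarmonic, sum_range_succ_eq_sum_Icc_one (by simp [degLog]) n]
  refine sum_congr rfl fun k hk => ?_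
  rw [degLog, coeff_mk, if_neg (by simp at hk; omega)]

theorem degHarmonic_eq_sum_stirling_general (lam : ℝ) (n : ℕ) :
    degHarmonic lam n =
      ∑ k ∈ Finset.Icc 1 n,
        (k : ℝ) * dff 1 (-lam) (k - 1) * PowerSeries.coeff (R := ℝ) n (Bser lam k) := by
  have hL := constantCoeff_degLog lam
  have hLsubst : HasSubst (degLog lam) := HasSubst.of_constantCoeff_zero' hL
  calc degHarmonic lam n = coeff n (degLog lam * PowerSeries.mk 1) := by
        rw [degHarmonic_eq_sum_coeff_degLog, coeff_mul_mk_one]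
    _ = coeff n ((X * degExp lam).subst (degLog lam)) := by
        rw [subst_mul hLsubst, subst_X hLsubst, degExp_subst_degLog]
    _ = ∑ k ∈ range (n + 1), coeff k (X * degExp lam) * coeff n (degLog lam ^ k) :=
        coeff_subst_eq_sum hL n
    _ = ∑ k ∈ Icc 1 n, coeff k (X * degExp lam) * coeff n (degLog lam ^ k) :=
        sum_range_succ_eq_sum_Icc_one (by simp) n
    _ = _ := sum_congr rfl fun k hk => by
        rw [coeff_X_mul_degExp lam (by simp at hk; omega), Bser_eq, LinearMap.map_smul,
          smul_eq_mul]
        ring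

theorem degHarmonic_eq_sum_stirling (lam : ℝ) (n : ℕ) (hn : 0 < n) :
    degHarmonic lam n =
      ∑ k ∈ Finset.Icc 1 n,
        (k : ℝ) * dff 1 (-lam) (k - 1) * PowerSeries.coeff (R := ℝ) n (Bser lam k) :=
  degHarmonic_eq_sum_stirling_general lam n
end

section
/- Fix a real number λ and a positive integer m. In the ring of formal power series over ℝ, let Li_{m,−λ}(X) := Σ_{k≥1} ((-1)^{k-1}/k^m) binom(−λ−1, k-1) X^k, and let S := −X·(1 − X)⁻¹ (a power series with zero constant term). Then the composition Li_{m,−λ}(S), obtained by substituting S for X in Li_{m,−λ}, equals −Σ_{n≥1} ( (1/n) Σ_{k=1}^{n} C(n,k) ((-1)^{k-1}/k^{m-1}) binom(λ+k-1, k-1) ) X^n; that is, for every n ≥ 1 the coefficient of X^n in Li_{m,−λ}(S) equals −(1/n) Σ_{k=1}^{n} C(n,k) ((-1)^{k-1}/k^{m-1}) binom(λ+k-1, k-1). -/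
/-- Composition (substitution) `f(g)` of formal power series over ℝ.  When `g` has zero
constant coefficient, the coefficient of `Xⁿ` in `f(g)` is the finite sum
`∑_{k=0}^{n} (coeff k f) · (coeff n (g^k))`, which is the usual composition of formal
power series. -/
noncomputable def psComp (f g : PowerSeries ℝ) : PowerSeries ℝ :=
  PowerSeries.mk fun n =>
    ∑ k ∈ Finset.range (n + 1), PowerSeries.coeff (R := ℝ) k f * PowerSeries.coeff (R := ℝ) n (g ^ k)

/-- The degenerate polylogarithm `Li_{m,μ}(X) = ∑_{k≥1} ((-1)^{k-1}/k^m) binom(μ-1, k-1) X^k`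
as a formal power series over ℝ. -/
noncomputable def degPolylog (m : ℕ) (mu : ℝ) : PowerSeries ℝ :=
  PowerSeries.mk fun k =>
    if k = 0 then 0 else (-1 : ℝ) ^ (k - 1) / (k : ℝ) ^ m * rchoose (mu - 1) (k - 1)

/-!
Since `X (1 - X)⁻¹ = ∑_{n ≥ 1} Xⁿ`, the coefficient of `Xⁿ` in its `k`-th power is `C(n-1, k-1)`.
Upper negation `binom(-λ-1, k-1) = (-1)^(k-1) binom(λ+k-1, k-1)` cancels the signs of
`Li_{m,-λ}` against those of `(-X (1 - X)⁻¹)^k`, and the absorption identity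
`n C(n-1, k-1) = k C(n, k)` turns `1/k^m` into `1/(n k^(m-1))`, term by term.
-/

open PowerSeries

section Geometric

variable {K : Type*} [Field K]

theorem PowerSeries.inv_one_sub_X : (1 - X : K⟦X⟧)⁻¹ = mk 1 :=
  (PowerSeries.eq_inv_iff_mul_eq_one (by simp)).mpr (mk_one_mul_one_sub_eq_one K) |>.symm

theorem PowerSeries.coeff_X_mul_inv_one_sub_X_pow_succ (n j : ℕ) :
    coeff n ((X * (1 - X : K⟦X⟧)⁻¹) ^ (j + 1)) = if j < n then ((n - 1).choose j : K) else 0 := by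
  rw [inv_one_sub_X, mul_pow, mk_one_pow_eq_mk_choose_add, coeff_X_pow_mul', coeff_mk]
  split_ifs <;> first | rfl | (congr 2; omega)

end Geometric

theorem PowerSeries.coeff_neg_pow {R : Type*} [CommRing R] (f : R⟦X⟧) (n k : ℕ) :
    coeff n ((-f) ^ k) = (-1) ^ k * coeff n (f ^ k) := by
  rw [neg_pow, ← map_one (C (R := R)), ← map_neg, ← map_pow, coeff_C_mul]

theorem coeff_psComp_of_coeff_zero_eq_zero {f : PowerSeries ℝ} (hf : coeff 0 f = 0)
    (g : PowerSeries ℝ) (n : ℕ) :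
    coeff n (psComp f g) = ∑ k ∈ Finset.Icc 1 n, coeff k f * coeff n (g ^ k) := by
  rw [psComp, coeff_mk, Finset.range_eq_Ico, Finset.sum_eq_sum_Ico_succ_bot (Nat.succ_pos n), hf,
    zero_mul, zero_add]
  rfl

theorem coeff_degPolylog_succ (m : ℕ) (mu : ℝ) (j : ℕ) :
    coeff (j + 1) (degPolylog m mu) = (-1) ^ j / ((j + 1 : ℕ) : ℝ) ^ m * rchoose (mu - 1) j := by
  simp [degPolylog]

theorem rchoose_neg_sub_one (x : ℝ) (j : ℕ) :
    rchoose (-x - 1) j = (-1) ^ j * rchoose (x + j) j := by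
  unfold rchoose
  rw [← mul_div_assoc, ← Finset.prod_range_reflect (fun i => x + j - i),
    show (-1 : ℝ) ^ j = ∏ _ ∈ Finset.range j, (-1 : ℝ) by simp, ← Finset.prod_mul_distrib]
  congr 1
  refine Finset.prod_congr rfl fun i hi => ?_
  rw [Nat.cast_sub (by simp at hi; omega), Nat.cast_sub (by simp at hi; omega)]
  push_cast
  ring

theorem coeff_degPolylog_comp (lam : ℝ) (m : ℕ) (hm : 0 < m) :
    ∀ n : ℕ, 1 ≤ n →
      PowerSeries.coeff (R := ℝ) n
          (psComp (degPolylog m (-lam)) (-(PowerSeries.X * (1 - PowerSeries.X)⁻¹))) =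
        -((1 / (n : ℝ)) * ∑ k ∈ Finset.Icc 1 n,
            (n.choose k : ℝ) * ((-1) ^ (k - 1) / (k : ℝ) ^ (m - 1)) *
              rchoose (lam + k - 1) (k - 1)) := by
  intro n hn
  obtain ⟨n, rfl⟩ := Nat.exists_eq_add_of_le' hn
  obtain ⟨m, rfl⟩ := Nat.exists_eq_add_of_le' hm
  rw [coeff_psComp_of_coeff_zero_eq_zero (by simp [degPolylog]), Finset.mul_sum,
    ← Finset.sum_neg_distrib]
  refine Finset.sum_congr rfl fun k hk => ?_
  obtain ⟨hk1, hkn⟩ := Finset.mem_Icc.mp hk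
  obtain ⟨j, rfl⟩ := Nat.exists_eq_add_of_le' hk1
  have hchoose : ((n + 1 : ℕ) : ℝ) * n.choose j = (n + 1).choose (j + 1) * ((j + 1 : ℕ) : ℝ) := by
    exact_mod_cast Nat.add_one_mul_choose_eq n j
  have hsign : (-1 : ℝ) ^ j * (-1) ^ j = 1 := by rw [← mul_pow]; norm_num
  have hlam : lam + ((j + 1 : ℕ) : ℝ) - 1 = lam + j := by push_cast; ring
  rw [coeff_degPolylog_succ, coeff_neg_pow, coeff_X_mul_inv_one_sub_X_pow_succ, if_pos (by omega),
    rchoose_neg_sub_one, hlam]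
  simp only [Nat.add_sub_cancel, pow_succ _ m, pow_succ (-1 : ℝ) j]
  field_simp
  linear_combination (-(rchoose (lam + j) j * (n.choose j : ℝ) * ((n + 1 : ℕ) : ℝ))) * hsign -
    rchoose (lam + j) j * hchoose
end
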